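/- arXiv:1502.06167 — 4 statements merged into one kernel-verified Lean document; each statement's English description precedes it below -/
import Mathlib

section
/- Let α, β, κ be strictly positive real numbers and R > 0, and for r ≥ 0 let A(r) be the 2×2 real matrix with rows (0, −αr) and (βr, −κr²). Then there exist constants θ > 0 and C > 0 such that for all t ≥ 0 and all r with 0 ≤ r ≤ R, every entry of the matrix exp(t·A(r)) has absolute value at most C·e^{−θ r² t}. -/
/-!
Each column `(c, u)` of `exp (t • A(r))` solves `c' = -α r u`, `u' = β r c - κ r² u`.
Along it, `β c² + α u²` has derivative `-2 α κ r² u²`, which only damps `u`. Adding the small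
cross term `-2 ε r c u` transfers the damping to `c` as well: the energy
`E = β c² + α u² - 2 ε r c u` stays comparable to `c² + u²` and satisfies `E' ≤ -ε r² E` as long
as `ε ≤ κ / 2` and `2 ε κ r² ≤ α β`, which holds uniformly in `r ≤ R` for small `ε`.
Grönwall then gives `E(t) ≤ e^{-ε r² t} E(0)`.
-/

open Real

theorem Matrix.hasDerivAt_exp_smul_apply {n : Type*} [Fintype n] [DecidableEq n]
    (A : Matrix n n ℝ) (i j : n) (t : ℝ) :
    HasDerivAt (fun s : ℝ => NormedSpace.exp (s • A) i j)
      ((A * NormedSpace.exp (t • A)) i j) t := by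
  let := Matrix.linftyOpNormedRing (n := n) (α := ℝ)
  let := Matrix.linftyOpNormedAlgebra (n := n) (R := ℝ) (α := ℝ)
  exact (Matrix.entryLinearMap ℝ ℝ i j).toContinuousLinearMap.hasFDerivAt.comp_hasDerivAt t
    (hasDerivAt_exp_smul_const' A t)

theorem le_mul_exp_of_hasDerivAt_le_mul {f f' : ℝ → ℝ} {K t : ℝ}
    (hf : ∀ s, HasDerivAt f (f' s) s) (bound : ∀ s, f' s ≤ K * f s) (ht : 0 ≤ t) :
    f t ≤ f 0 * exp (K * t) := by
  have := le_gronwallBound_of_liminf_deriv_right_le (K := K) (ε := 0)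
    (fun s _ => (hf s).continuousAt.continuousWithinAt)
    (fun s _ _ hr => (hf s).hasDerivWithinAt.liminf_right_slope_le hr) le_rfl
    (fun s _ => by rw [add_zero]; exact bound s) t ⟨ht, le_rfl⟩
  rwa [gronwallBound_ε0, sub_zero] at this

def lyapunovEnergy (α β ε r c u : ℝ) : ℝ := β * c ^ 2 + α * u ^ 2 - 2 * ε * r * (c * u)

section lyapunovEnergy

variable {α β κ ε r : ℝ}

theorem lyapunovEnergy_coercive (hβ : 0 < β) (h : 4 * ε ^ 2 * r ^ 2 ≤ α * β) (c u : ℝ) :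
    β / 2 * c ^ 2 + α / 2 * u ^ 2 ≤ lyapunovEnergy α β ε r c u := by
  unfold lyapunovEnergy
  nlinarith [sq_nonneg (β * c - 2 * ε * r * u), mul_nonneg (sub_nonneg.2 h) (sq_nonneg u)]

/-- The left side is the derivative of the energy along `c' = -α r u`, `u' = β r c - κ r² u`. -/
theorem lyapunovEnergy_dissipation (hα : 0 < α) (hβ : 0 < β) (hε : 0 ≤ ε) (hεκ : ε ≤ κ / 2)
    (h : 2 * ε * κ * r ^ 2 ≤ α * β) (c u : ℝ) :
    r ^ 2 * (2 * ε * κ * r * (c * u) - 2 * ε * β * c ^ 2 - 2 * (κ - ε) * α * u ^ 2)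
      ≤ -(ε * r ^ 2) * lyapunovEnergy α β ε r c u := by
  have hcoef : ε * (κ - ε) ^ 2 * r ^ 2 ≤ (2 * κ - 3 * ε) * α * β := calc
    ε * (κ - ε) ^ 2 * r ^ 2 ≤ ε * κ ^ 2 * r ^ 2 := by gcongr <;> linarith
    _ = κ / 2 * (2 * ε * κ * r ^ 2) := by ring
    _ ≤ κ / 2 * (α * β) := by gcongr; linarith
    _ ≤ (2 * κ - 3 * ε) * α * β := by nlinarith [mul_pos hα hβ]
  -- `β` times the form is `ε (β c - (κ - ε) r u)²` plus a nonnegative multiple of `u²`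
  have hform :
      0 ≤ ε * β * c ^ 2 + (2 * κ - 3 * ε) * α * u ^ 2 - 2 * ε * (κ - ε) * r * (c * u) := by
    refine nonneg_of_mul_nonneg_right ?_ hβ
    nlinarith [mul_nonneg hε (sq_nonneg (β * c - (κ - ε) * r * u)),
      mul_nonneg (sub_nonneg.2 hcoef) (sq_nonneg u)]
  unfold lyapunovEnergy
  nlinarith [mul_nonneg (sq_nonneg r) hform]

theorem lyapunovEnergy_le_mul_exp_of_hasDerivAt (hα : 0 < α) (hβ : 0 < β) (hε : 0 ≤ ε)
    (hεκ : ε ≤ κ / 2) (h : 2 * ε * κ * r ^ 2 ≤ α * β) {c u : ℝ → ℝ}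
    (hc : ∀ s, HasDerivAt c (-(α * r) * u s) s)
    (hu : ∀ s, HasDerivAt u (β * r * c s - κ * r ^ 2 * u s) s) {t : ℝ} (ht : 0 ≤ t) :
    lyapunovEnergy α β ε r (c t) (u t)
      ≤ lyapunovEnergy α β ε r (c 0) (u 0) * exp (-(ε * r ^ 2) * t) := by
  refine le_mul_exp_of_hasDerivAt_le_mul (fun s => ?_)
    (fun s => lyapunovEnergy_dissipation hα hβ hε hεκ h (c s) (u s)) ht
  have := ((((hc s).pow 2).const_mul β).add (((hu s).pow 2).const_mul α)).sub
    (((hc s).mul (hu s)).const_mul (2 * ε * r))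
  exact this.congr_deriv (by ring)

theorem lyapunovEnergy_exp_smul_le (hα : 0 < α) (hβ : 0 < β) (hε : 0 ≤ ε)
    (hεκ : ε ≤ κ / 2) (h : 2 * ε * κ * r ^ 2 ≤ α * β) (j : Fin 2) {t : ℝ} (ht : 0 ≤ t) :
    lyapunovEnergy α β ε r (NormedSpace.exp (t • !![0, -α * r; β * r, -κ * r ^ 2]) 0 j)
        (NormedSpace.exp (t • !![0, -α * r; β * r, -κ * r ^ 2]) 1 j)
      ≤ max α β * exp (-(ε * r ^ 2) * t) := by
  set A : Matrix (Fin 2) (Fin 2) ℝ := !![0, -α * r; β * r, -κ * r ^ 2] with hA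
  have hG := Matrix.hasDerivAt_exp_smul_apply A
  refine (lyapunovEnergy_le_mul_exp_of_hasDerivAt hα hβ hε hεκ h
    (c := fun s => NormedSpace.exp (s • A) 0 j) (u := fun s => NormedSpace.exp (s • A) 1 j)
    (fun s => ?_) (fun s => ?_) ht).trans
    (mul_le_mul_of_nonneg_right ?_ (exp_pos _).le)
  · simpa [hA, Matrix.mul_apply, Fin.sum_univ_two] using hG 0 j s
  · simpa [hA, Matrix.mul_apply, Fin.sum_univ_two, sub_eq_add_neg] using hG 1 j s
  · fin_cases j <;> simp [lyapunovEnergy]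

end lyapunovEnergy

/-- Uniform Green's-matrix bound (γ = 0 case of Lemma 3.2): for strictly
positive `α, β, κ` and `R > 0`, there are `θ > 0` and `C > 0` such that for all
`t ≥ 0` and `0 ≤ r ≤ R`, every entry of `exp (t · A(r))` is bounded by
`C·e^{−θ r² t}`, where `A(r) = !![0, -αr; βr, -κr²]`. -/
theorem exp_symbol_matrix_entry_bound (α β κ R : ℝ)
    (hα : 0 < α) (hβ : 0 < β) (hκ : 0 < κ) (hR : 0 < R) :
    ∃ θ : ℝ, 0 < θ ∧ ∃ C : ℝ, 0 < C ∧
      ∀ t : ℝ, 0 ≤ t → ∀ r : ℝ, 0 ≤ r → r ≤ R → ∀ i j : Fin 2,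
        |(NormedSpace.exp
            (t • (!![0, -α * r; β * r, -κ * r ^ 2] : Matrix (Fin 2) (Fin 2) ℝ))) i j|
          ≤ C * Real.exp (-θ * r ^ 2 * t) := by
  set ε := min (κ / 2) (α * β / (2 * κ * R ^ 2))
  have hε : 0 < ε := lt_min (by positivity) (by positivity)
  have hεR : ε * (2 * κ * R ^ 2) ≤ α * β := (le_div_iff₀ (by positivity)).1 (min_le_right _ _)
  set K := 2 * max α β / min α β
  refine ⟨ε / 2, by positivity, √K, sqrt_pos.2 (by positivity), fun t ht r hr hrR i j => ?_⟩
  have hεκ : ε ≤ κ / 2 := min_le_left _ _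
  have hcoupling : 2 * ε * κ * r ^ 2 ≤ α * β := calc
    2 * ε * κ * r ^ 2 = ε * (2 * κ * r ^ 2) := by ring
    _ ≤ ε * (2 * κ * R ^ 2) := by gcongr
    _ ≤ α * β := hεR
  have henergy := lyapunovEnergy_exp_smul_le hα hβ hε.le hεκ hcoupling j ht
  set G := NormedSpace.exp (t • !![0, -α * r; β * r, -κ * r ^ 2])
  have hcoercive :
      β / 2 * G 0 j ^ 2 + α / 2 * G 1 j ^ 2 ≤ lyapunovEnergy α β ε r (G 0 j) (G 1 j) :=
    lyapunovEnergy_coercive hβ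
      (by nlinarith [mul_le_mul_of_nonneg_right hεκ (by positivity : 0 ≤ 4 * ε * r ^ 2)]) _ _
  have hentry : min α β / 2 * G i j ^ 2 ≤ max α β * exp (-(ε * r ^ 2) * t) := by
    fin_cases i <;> dsimp only [Fin.zero_eta, Fin.mk_one] <;>
      nlinarith [min_le_left α β, min_le_right α β, sq_nonneg (G 0 j), sq_nonneg (G 1 j)]
  refine abs_le_of_sq_le_sq ?_ (by positivity)
  calc G i j ^ 2 ≤ K * exp (-(ε * r ^ 2) * t) := by
        rw [div_mul_eq_mul_div, le_div_iff₀ (lt_min hα hβ)]; linarith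
    _ = (√K * exp (-(ε / 2) * r ^ 2 * t)) ^ 2 := by
        rw [mul_pow, sq_sqrt (by positivity), ← exp_nat_mul]; ring_nf
end

section
/- Let R ∈ ℤ. There exists a constant C > 0 such that for every s > 0, the sum over all integers q ≤ R of e^{−(2/9)·4^q·s} · (1 − e^{−(20/3)·4^q·s})^{1/2} is at most C. -/
/-!
With `x = 4 ^ q * s`, each term is at most `√(20/3) * √x` (since `1 - e^{-y} ≤ y`) and at most
`(9/2) / x` (since `e^{-y} ≤ 1/y`). Writing `s = 4 ^ n * t` with `t ∈ [1/4, 1]`, these two bounds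
make the terms decay like `2 ^ (-|q + n|)` on either side of `q = -n`, so even the sum over all of
`ℤ` is bounded independently of `s`.
-/

open Real

lemma exp_neg_le_inv {y : ℝ} (hy : 0 < y) : exp (-y) ≤ y⁻¹ := by
  rw [le_inv_comm₀ (exp_pos _) hy, ← exp_neg, neg_neg]
  linarith [add_one_le_exp y]

lemma sqrt_one_sub_exp_neg_le_sqrt (x : ℝ) : √(1 - exp (-x)) ≤ √x :=
  sqrt_le_sqrt (by linarith [add_one_le_exp (-x)])

lemma sqrt_one_sub_exp_neg_le_one (x : ℝ) : √(1 - exp (-x)) ≤ 1 :=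
  sqrt_le_one.mpr (by linarith [exp_pos (-x)])

section
variable {a b x : ℝ}

lemma exp_neg_mul_mul_sqrt_one_sub_exp_neg_le_sqrt (ha : 0 ≤ a) (hb : 0 ≤ b) (hx : 0 ≤ x) :
    exp (-a * x) * √(1 - exp (-b * x)) ≤ √b * √x := by
  rw [← sqrt_mul hb, ← one_mul (√(b * x))]
  simp only [neg_mul]
  exact mul_le_mul (exp_le_one_iff.mpr (by nlinarith)) (sqrt_one_sub_exp_neg_le_sqrt _)
    (sqrt_nonneg _) zero_le_one

lemma exp_neg_mul_mul_sqrt_one_sub_exp_neg_le_inv (ha : 0 < a) (hx : 0 < x) :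
    exp (-a * x) * √(1 - exp (-b * x)) ≤ a⁻¹ / x := by
  rw [div_eq_mul_inv, ← mul_inv, ← mul_one (a * x)⁻¹]
  simp only [neg_mul]
  exact mul_le_mul (exp_neg_le_inv (by positivity)) (sqrt_one_sub_exp_neg_le_one _)
    (sqrt_nonneg _) (by positivity)

end

lemma hasSum_zpow_neg_abs {r : ℝ} (hr : 1 < r) :
    HasSum (fun k : ℤ ↦ r ^ (-|k|)) ((r + 1) / (r - 1)) := by
  have hr' : |r⁻¹| < 1 := by
    rw [abs_of_pos (by positivity)]; exact inv_lt_one_of_one_lt₀ hr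
  have hgeom := hasSum_geometric_of_abs_lt_one hr'
  have hnat : HasSum (fun n : ℕ ↦ r ^ (-|(n : ℤ)|)) (1 - r⁻¹)⁻¹ := by
    simpa [zpow_neg] using hgeom
  have hneg : HasSum (fun n : ℕ ↦ r ^ (-|-((n : ℤ) + 1)|)) (r⁻¹ * (1 - r⁻¹)⁻¹) := by
    refine (hgeom.mul_left r⁻¹).congr_fun fun n ↦ ?_
    rw [abs_neg, ← Nat.cast_succ, Nat.abs_cast, zpow_neg, zpow_natCast, pow_succ', inv_pow,
      mul_inv]
  convert HasSum.of_nat_of_neg_add_one (f := fun k : ℤ ↦ r ^ (-|k|)) hnat hneg using 1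
  have hr1 : r - 1 ≠ 0 := by linarith
  field_simp

section
variable {φ : ℝ → ℝ} {c d : ℝ}

lemma le_zpow_neg_abs_of_le_sqrt_of_le_inv (h0 : ∀ x, 0 < x → 0 ≤ φ x)
    (hc : ∀ x, 0 < x → φ x ≤ c * √x) (hd : ∀ x, 0 < x → φ x ≤ d / x)
    {t : ℝ} (ht : t ∈ Set.Icc (1 / 4) 1) (k : ℤ) :
    φ (4 ^ k * t) ≤ (c + 2 * d) * 2 ^ (-|k|) := by
  have hc0 : 0 ≤ c := by simpa using (h0 1 one_pos).trans (hc 1 one_pos)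
  have hd0 : 0 ≤ d := by simpa using (h0 1 one_pos).trans (hd 1 one_pos)
  have hx : 0 < 4 ^ k * t := mul_pos (by positivity) (by linarith [ht.1])
  have h4 : (4 : ℝ) ^ k = 2 ^ k * 2 ^ k := by rw [← mul_zpow]; norm_num
  rcases le_or_gt k 0 with hk | hk
  · rw [abs_of_nonpos hk, neg_neg]
    have hsqrt : √(4 ^ k * t) ≤ 2 ^ k :=
      sqrt_le_iff.mpr ⟨by positivity, by
        rw [h4, sq]; nlinarith [ht.2, zpow_pos (two_pos (α := ℝ)) k]⟩
    calc φ (4 ^ k * t) ≤ c * √(4 ^ k * t) := hc _ hx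
      _ ≤ c * 2 ^ k := by gcongr
      _ ≤ (c + 2 * d) * 2 ^ k := by gcongr; linarith
  · rw [abs_of_pos hk]
    have h2k : 2 ≤ (2 : ℝ) ^ k := by
      simpa using zpow_le_zpow_right₀ one_le_two (show (1 : ℤ) ≤ k by omega)
    have hlow : 2 ^ k / 2 ≤ 4 ^ k * t := by
      rw [h4]; nlinarith [ht.1, zpow_pos (two_pos (α := ℝ)) k]
    calc φ (4 ^ k * t) ≤ d / (4 ^ k * t) := hd _ hx
      _ ≤ d / (2 ^ k / 2) := by gcongr
      _ ≤ (c + 2 * d) * 2 ^ (-k) := by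
        rw [zpow_neg, div_div_eq_mul_div, div_eq_mul_inv]
        gcongr
        linarith

lemma summable_and_tsum_le_of_le_sqrt_of_le_inv_of_mem_Icc (h0 : ∀ x, 0 < x → 0 ≤ φ x)
    (hc : ∀ x, 0 < x → φ x ≤ c * √x) (hd : ∀ x, 0 < x → φ x ≤ d / x)
    {t : ℝ} (ht : t ∈ Set.Icc (1 / 4) 1) :
    Summable (fun k : ℤ ↦ φ (4 ^ k * t)) ∧ ∑' k : ℤ, φ (4 ^ k * t) ≤ 3 * (c + 2 * d) := by
  have hmaj : HasSum (fun k : ℤ ↦ (c + 2 * d) * 2 ^ (-|k|)) ((c + 2 * d) * 3) := by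
    have h := (hasSum_zpow_neg_abs one_lt_two).mul_left (c + 2 * d)
    rwa [show ((2 : ℝ) + 1) / (2 - 1) = 3 by norm_num] at h
  have hle := le_zpow_neg_abs_of_le_sqrt_of_le_inv h0 hc hd ht
  have hpos (k : ℤ) : 0 < 4 ^ k * t := mul_pos (by positivity) (by linarith [ht.1])
  have hsum : Summable (fun k : ℤ ↦ φ (4 ^ k * t)) :=
    .of_nonneg_of_le (fun k ↦ h0 _ (hpos k)) hle hmaj.summable
  refine ⟨hsum, ?_⟩
  rw [mul_comm, ← hmaj.tsum_eq]
  exact hsum.tsum_le_tsum hle hmaj.summable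

lemma summable_and_tsum_le_of_le_sqrt_of_le_inv (h0 : ∀ x, 0 < x → 0 ≤ φ x)
    (hc : ∀ x, 0 < x → φ x ≤ c * √x) (hd : ∀ x, 0 < x → φ x ≤ d / x)
    {s : ℝ} (hs : 0 < s) :
    Summable (fun q : ℤ ↦ φ (4 ^ q * s)) ∧ ∑' q : ℤ, φ (4 ^ q * s) ≤ 3 * (c + 2 * d) := by
  set n := Int.log 4 s + 1
  have hlog := Int.zpow_log_le_self (b := 4) (by norm_num) hs
  have hlog' := Int.lt_zpow_succ_log_self (b := 4) (by norm_num) s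
  push_cast at hlog hlog'
  have h4n : (0 : ℝ) < 4 ^ n := by positivity
  have ht : 1 / 4 ≤ s / 4 ^ n := by
    rw [le_div_iff₀ h4n, zpow_add_one₀ (by norm_num)]; linarith
  have ht' : s / 4 ^ n ≤ 1 := (div_le_one h4n).mpr hlog'.le
  have hshift : (fun q : ℤ ↦ φ (4 ^ q * s)) =
      (fun k : ℤ ↦ φ (4 ^ k * (s / 4 ^ n))) ∘ Equiv.addRight n := by
    ext q
    simp only [Function.comp, Equiv.coe_addRight, zpow_add₀ (four_ne_zero (α := ℝ))]
    congr 1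
    field_simp
  obtain ⟨hsum, hle⟩ := summable_and_tsum_le_of_le_sqrt_of_le_inv_of_mem_Icc h0 hc hd ⟨ht, ht'⟩
  rw [hshift]
  exact ⟨(Equiv.addRight n).summable_iff.mpr hsum, ((Equiv.addRight n).tsum_eq _).trans_le hle⟩

end

/-- Uniform-in-time series bound (equation (25) of the paper): for `R ∈ ℤ`
there is `C > 0` such that for all `s > 0`,
`∑_{q ≤ R} e^{−(2/9)·4^q·s} (1 − e^{−(20/3)·4^q·s})^{1/2} ≤ C`. -/
theorem sum_exp_annulus_bound (R : ℤ) :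
    ∃ C : ℝ, 0 < C ∧ ∀ s : ℝ, 0 < s →
      Summable (fun q : {q : ℤ // q ≤ R} =>
        Real.exp (-(2 / 9) * (4 : ℝ) ^ (q : ℤ) * s)
          * Real.sqrt (1 - Real.exp (-(20 / 3) * (4 : ℝ) ^ (q : ℤ) * s))) ∧
      (∑' q : {q : ℤ // q ≤ R},
        Real.exp (-(2 / 9) * (4 : ℝ) ^ (q : ℤ) * s)
          * Real.sqrt (1 - Real.exp (-(20 / 3) * (4 : ℝ) ^ (q : ℤ) * s))) ≤ C := by
  refine ⟨3 * (√(20 / 3) + 2 * (2 / 9)⁻¹), by positivity, fun s hs ↦ ?_⟩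
  obtain ⟨hsum, hle⟩ := summable_and_tsum_le_of_le_sqrt_of_le_inv
    (φ := fun x ↦ exp (-(2 / 9) * x) * √(1 - exp (-(20 / 3) * x)))
    (fun x _ ↦ by positivity)
    (fun x hx ↦ exp_neg_mul_mul_sqrt_one_sub_exp_neg_le_sqrt (by norm_num) (by norm_num) hx.le)
    (fun x hx ↦ exp_neg_mul_mul_sqrt_one_sub_exp_neg_le_inv (by norm_num) hx) hs
  simp only [mul_assoc] at hsum hle ⊢
  exact ⟨hsum.subtype _, (hsum.tsum_subtype_le _ _ fun q ↦ by positivity).trans hle⟩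
end

section
/- Let θ > 0 and R ∈ ℤ. There exists a constant C > 0 such that for every t ≥ 0, the sum over all integers q ≤ R of the square root of ∫_{A_q} e^{−θ|ξ|²t} dξ is at most C·(1 + t)^{−3/4}, where A_q = {ξ ∈ ℝ³ : (3/4)·2^q < |ξ| < (8/3)·2^q}. -/
/-!
On `A_q` the Gaussian is at most `exp (-θ (3/4 · 2^q)² t)` and `|A_q| ≤ |B(0, 8/3 · 2^q)| ∝ 8^q`,
so with `q = R - n` the `q`-th term is at most a constant times `x^{3/4} e^{-s x}`, where
`x = 4^{-n}` and `s` is a fixed multiple of `t`. These terms are dominated by the geometric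
series `Σ x^{3/4}`, while `s^{3/4}` times them is `y^{3/4} e^{-y}` along the geometric sequence
`y = s 4^{-n}`: bounded by `y^{3/4}` once `y ≤ 1` and by `y^{-1/4}` before, hence summable
uniformly in `s`. Together these give `O((1 + s)^{-3/4})`.
-/

open Finset MeasureTheory Metric Module

theorem summable_and_tsum_le_of_le_two_sided_geometric {f : ℕ → ℝ}
    (hf : ∀ n, 0 ≤ f n) {ρ σ : ℝ} (hρ₀ : 0 ≤ ρ) (hρ₁ : ρ < 1) (hσ₀ : 0 ≤ σ) (hσ₁ : σ < 1) {N : ℕ}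
    (head : ∀ n < N, f n ≤ ρ ^ (N - 1 - n)) (tail : ∀ n, f (n + N) ≤ σ ^ n) :
    Summable f ∧ ∑' n, f n ≤ (1 - ρ)⁻¹ + (1 - σ)⁻¹ := by
  have hσ := summable_geometric_of_lt_one hσ₀ hσ₁
  have htail : Summable fun n ↦ f (n + N) := .of_nonneg_of_le (fun _ ↦ hf _) tail hσ
  have hsum : Summable f := (summable_nat_add_iff N).1 htail
  refine ⟨hsum, ?_⟩
  rw [← hsum.sum_add_tsum_nat_add N]
  gcongr
  · calc ∑ n ∈ range N, f n ≤ ∑ n ∈ range N, ρ ^ (N - 1 - n) :=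
          sum_le_sum fun n hn ↦ head n (mem_range.1 hn)
      _ = ∑ n ∈ range N, ρ ^ n := sum_range_reflect (ρ ^ ·) N
      _ ≤ (1 - ρ)⁻¹ := by
          simpa using geom_sum_Ico_le_of_lt_one (m := 0) (n := N) hρ₀ hρ₁
  · calc ∑' n, f (n + N) ≤ ∑' n, σ ^ n := htail.tsum_le_tsum tail hσ
      _ = (1 - σ)⁻¹ := tsum_geometric_of_lt_one hσ₀ hσ₁

theorem exists_first_mul_pow_le_one {r : ℝ} (hr₀ : 0 ≤ r) (hr₁ : r < 1) (s : ℝ) :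
    ∃ N : ℕ, s * r ^ N ≤ 1 ∧ ∀ n < N, 1 < s * r ^ n := by
  classical
  have h : ∃ N : ℕ, s * r ^ N ≤ 1 := by
    have := (tendsto_pow_atTop_nhds_zero_of_lt_one hr₀ hr₁).const_mul s
    rw [mul_zero] at this
    exact (this.eventually (ge_mem_nhds zero_lt_one)).exists
  exact ⟨Nat.find h, Nat.find_spec h, fun n hn ↦ not_le.1 (Nat.find_min h hn)⟩

theorem Real.rpow_mul_exp_neg_le_rpow_sub_one {y : ℝ} (hy : 0 < y) (α : ℝ) :
    y ^ α * Real.exp (-y) ≤ y ^ (α - 1) := by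
  have hye : y * Real.exp (-y) ≤ 1 := by
    rw [Real.exp_neg, mul_inv_le_iff₀ (Real.exp_pos y), one_mul]
    linarith [Real.add_one_le_exp y]
  calc y ^ α * Real.exp (-y) = y ^ (α - 1) * (y * Real.exp (-y)) := by
        rw [Real.rpow_sub_one hy.ne']; field_simp
    _ ≤ y ^ (α - 1) := mul_le_of_le_one_right (by positivity) hye

theorem summable_and_tsum_rpow_mul_exp_neg_geometric_le {α r s : ℝ} (hα₀ : 0 < α)
    (hα₁ : α < 1) (hr₀ : 0 < r) (hr₁ : r < 1) (hs : 0 ≤ s) :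
    Summable (fun n : ℕ ↦ (s * r ^ n) ^ α * Real.exp (-(s * r ^ n))) ∧
      ∑' n : ℕ, (s * r ^ n) ^ α * Real.exp (-(s * r ^ n)) ≤
        (1 - r ^ (1 - α))⁻¹ + (1 - r ^ α)⁻¹ := by
  obtain ⟨N, hN, hlt⟩ := exists_first_mul_pow_le_one hr₀.le hr₁ s
  refine summable_and_tsum_le_of_le_two_sided_geometric (fun n ↦ by positivity)
    (by positivity) (Real.rpow_lt_one hr₀.le hr₁ (by linarith)) (by positivity)
    (Real.rpow_lt_one hr₀.le hr₁ hα₀) (N := N) (fun n hn ↦ ?_) (fun n ↦ ?_)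
  · have hk : 1 ≤ s * r ^ n * r ^ (N - 1 - n) := by
      rw [mul_assoc, ← pow_add, Nat.add_sub_of_le (by omega)]
      exact (hlt (N - 1) (by omega)).le
    have hy : (r ^ (N - 1 - n))⁻¹ ≤ s * r ^ n := by
      rwa [inv_le_iff_one_le_mul₀ (by positivity)]
    calc (s * r ^ n) ^ α * Real.exp (-(s * r ^ n)) ≤ (s * r ^ n) ^ (α - 1) :=
          Real.rpow_mul_exp_neg_le_rpow_sub_one ((by positivity : (0:ℝ) < _).trans_le hy) α
      _ ≤ ((r ^ (N - 1 - n))⁻¹) ^ (α - 1) :=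
          Real.rpow_le_rpow_of_nonpos (by positivity) hy (by linarith)
      _ = (r ^ (1 - α)) ^ (N - 1 - n) := by
          rw [Real.inv_rpow (by positivity), ← Real.rpow_neg (by positivity), neg_sub,
            Real.rpow_pow_comm hr₀.le]
  · have hy : s * r ^ (n + N) ≤ r ^ n := by
      rw [pow_add, mul_left_comm]
      exact mul_le_of_le_one_right (by positivity) hN
    calc (s * r ^ (n + N)) ^ α * Real.exp (-(s * r ^ (n + N))) ≤ (s * r ^ (n + N)) ^ α :=
          mul_le_of_le_one_right (by positivity) (Real.exp_le_one_iff.2 (by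
            simp only [neg_nonpos]; positivity))
      _ ≤ (r ^ n) ^ α := Real.rpow_le_rpow (by positivity) hy hα₀.le
      _ = (r ^ α) ^ n := (Real.rpow_pow_comm hr₀.le α n).symm

theorem exists_tsum_rpow_mul_exp_neg_geometric_le {α r : ℝ} (hα₀ : 0 < α) (hα₁ : α < 1)
    (hr₀ : 0 < r) (hr₁ : r < 1) :
    ∃ C > 0, ∀ s ≥ 0, Summable (fun n : ℕ ↦ (r ^ n) ^ α * Real.exp (-(s * r ^ n))) ∧
      ∑' n : ℕ, (r ^ n) ^ α * Real.exp (-(s * r ^ n)) ≤ C * (1 + s) ^ (-α) := by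
  have hσ₁ : r ^ α < 1 := Real.rpow_lt_one hr₀.le hr₁ hα₀
  have hρ₁ : r ^ (1 - α) < 1 := Real.rpow_lt_one hr₀.le hr₁ (by linarith)
  refine ⟨(1 - r ^ (1 - α))⁻¹ + 2 * (1 - r ^ α)⁻¹,
    by have := sub_pos.2 hσ₁; have := sub_pos.2 hρ₁; positivity, fun s hs ↦ ?_⟩
  set T := ∑' n : ℕ, (r ^ n) ^ α * Real.exp (-(s * r ^ n))
  have hterm (n : ℕ) : (r ^ n) ^ α * Real.exp (-(s * r ^ n)) ≤ (r ^ α) ^ n := by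
    rw [← Real.rpow_pow_comm hr₀.le]
    exact mul_le_of_le_one_right (by positivity)
      (Real.exp_le_one_iff.2 (by simp only [neg_nonpos]; positivity))
  have hgeom := summable_geometric_of_lt_one (by positivity) hσ₁
  have hsum : Summable fun n : ℕ ↦ (r ^ n) ^ α * Real.exp (-(s * r ^ n)) :=
    .of_nonneg_of_le (fun n ↦ by positivity) hterm hgeom
  have hT : T ≤ (1 - r ^ α)⁻¹ :=
    (hsum.tsum_le_tsum hterm hgeom).trans (tsum_geometric_of_lt_one (by positivity) hσ₁).le
  have hsT : s ^ α * T ≤ (1 - r ^ (1 - α))⁻¹ + (1 - r ^ α)⁻¹ := by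
    calc s ^ α * T = ∑' n : ℕ, (s * r ^ n) ^ α * Real.exp (-(s * r ^ n)) := by
          rw [← tsum_mul_left]
          exact tsum_congr fun n ↦ by rw [Real.mul_rpow hs (by positivity), mul_assoc]
      _ ≤ _ := (summable_and_tsum_rpow_mul_exp_neg_geometric_le hα₀ hα₁ hr₀ hr₁ hs).2
  refine ⟨hsum, ?_⟩
  rw [Real.rpow_neg (by positivity), ← div_eq_mul_inv, le_div_iff₀ (by positivity)]
  calc T * (1 + s) ^ α ≤ T * (1 + s ^ α) := by
        gcongr
        simpa using Real.rpow_add_le_add_rpow zero_le_one hs hα₀.le hα₁.le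
    _ = T + s ^ α * T := by ring
    _ ≤ _ := by linarith

theorem one_add_mul_rpow_neg_le {c t α : ℝ} (hc : 0 < c) (ht : 0 ≤ t) (hα : 0 ≤ α) :
    (1 + c * t) ^ (-α) ≤ (min 1 c) ^ (-α) * (1 + t) ^ (-α) := by
  have hm : 0 < min 1 c := lt_min one_pos hc
  rw [← Real.mul_rpow hm.le (by positivity)]
  refine Real.rpow_le_rpow_of_nonpos (by positivity) ?_ (neg_nonpos.2 hα)
  nlinarith [min_le_left 1 c, min_le_right 1 c]

theorem sqrt_setIntegral_exp_neg_annulus_le {E : Type*} [NormedAddCommGroup E]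
    [NormedSpace ℝ E] [FiniteDimensional ℝ E] [MeasurableSpace E] [BorelSpace E]
    (μ : Measure E) [μ.IsAddHaarMeasure] {θ t a b : ℝ} (hθ : 0 ≤ θ) (ht : 0 ≤ t)
    (ha : 0 ≤ a) (hb : 0 < b) :
    √(∫ ξ in {ξ : E | a < ‖ξ‖ ∧ ‖ξ‖ < b}, Real.exp (-θ * ‖ξ‖ ^ 2 * t) ∂μ) ≤
      √(μ.real (ball 0 1)) * b ^ ((finrank ℝ E : ℝ) / 2) *
        Real.exp (-(θ * a ^ 2 * t) / 2) := by
  set S := {ξ : E | a < ‖ξ‖ ∧ ‖ξ‖ < b}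
  have hSball : S ⊆ ball 0 b := fun ξ hξ ↦ mem_ball_zero_iff.2 hξ.2
  have hSfin : μ S < ⊤ := (measure_mono hSball).trans_lt measure_ball_lt_top
  have hbound : ∀ ξ ∈ S,
      ‖Real.exp (-θ * ‖ξ‖ ^ 2 * t)‖ ≤ Real.exp (-(θ * a ^ 2 * t)) := by
    intro ξ hξ
    rw [Real.norm_of_nonneg (Real.exp_nonneg _), Real.exp_le_exp]
    have : a ^ 2 ≤ ‖ξ‖ ^ 2 := pow_le_pow_left₀ ha hξ.1.le 2
    nlinarith [mul_nonneg hθ ht]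
  have hvol : μ.real S ≤ b ^ finrank ℝ E * μ.real (ball 0 1) := by
    calc μ.real S ≤ μ.real (ball 0 b) := measureReal_mono hSball measure_ball_lt_top.ne
      _ = b ^ finrank ℝ E * μ.real (ball 0 1) := by
        rw [Measure.real, Measure.addHaar_ball_of_pos μ 0 hb, ENNReal.toReal_mul,
          ENNReal.toReal_ofReal (by positivity), Measure.real]
  calc √(∫ ξ in S, Real.exp (-θ * ‖ξ‖ ^ 2 * t) ∂μ)
      ≤ √(Real.exp (-(θ * a ^ 2 * t)) * (b ^ finrank ℝ E * μ.real (ball 0 1))) := by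
        gcongr
        calc ∫ ξ in S, Real.exp (-θ * ‖ξ‖ ^ 2 * t) ∂μ
            ≤ ‖∫ ξ in S, Real.exp (-θ * ‖ξ‖ ^ 2 * t) ∂μ‖ := Real.le_norm_self _
          _ ≤ Real.exp (-(θ * a ^ 2 * t)) * μ.real S :=
            norm_setIntegral_le_of_norm_le_const hSfin hbound
          _ ≤ _ := by gcongr
    _ = _ := by
        rw [Real.sqrt_mul (Real.exp_nonneg _), Real.sqrt_mul (by positivity),
          ← Real.exp_half, Real.sqrt_eq_rpow, ← Real.rpow_natCast b, ← Real.rpow_mul hb.le]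
        ring_nf

theorem sqrt_setIntegral_exp_neg_dyadic_annulus_le {E : Type*} [NormedAddCommGroup E]
    [NormedSpace ℝ E] [FiniteDimensional ℝ E] [MeasurableSpace E] [BorelSpace E]
    (μ : Measure E) [μ.IsAddHaarMeasure] {θ t a b : ℝ} (hθ : 0 ≤ θ) (ht : 0 ≤ t)
    (ha : 0 ≤ a) (hb : 0 < b) (R : ℤ) (n : ℕ) :
    √(∫ ξ in {ξ : E | a * 2 ^ (R - n) < ‖ξ‖ ∧ ‖ξ‖ < b * 2 ^ (R - n)},
        Real.exp (-θ * ‖ξ‖ ^ 2 * t) ∂μ) ≤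
      √(μ.real (ball 0 1)) * (b * 2 ^ R) ^ ((finrank ℝ E : ℝ) / 2) *
        (((1 / 4) ^ n) ^ ((finrank ℝ E : ℝ) / 4) *
          Real.exp (-(θ * (a * 2 ^ R) ^ 2 / 2 * t * (1 / 4) ^ n))) := by
  have h2 : (2 : ℝ) ^ (R - n) = 2 ^ R * (1 / 2) ^ n := by
    rw [zpow_sub₀ two_ne_zero, zpow_natCast, div_eq_mul_inv, one_div, inv_pow]
  have h4 : (1 / 4 : ℝ) ^ n = ((1 / 2) ^ n) ^ 2 := by
    rw [← pow_mul, mul_comm, pow_mul]; norm_num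
  have h4rpow : (((1 / 2 : ℝ) ^ n) ^ 2) ^ ((finrank ℝ E : ℝ) / 4) =
      ((1 / 2 : ℝ) ^ n) ^ ((finrank ℝ E : ℝ) / 2) := by
    rw [← Real.rpow_natCast _ 2, ← Real.rpow_mul (by positivity)]
    ring_nf
  refine (sqrt_setIntegral_exp_neg_annulus_le μ hθ ht (by positivity)
    (by positivity)).trans_eq ?_
  rw [h4, h4rpow, h2, ← mul_assoc b, Real.mul_rpow (by positivity) (by positivity)]
  ring_nf

def Int.natEquivLE (R : ℤ) : ℕ ≃ {q : ℤ // q ≤ R} where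
  toFun n := ⟨R - n, by omega⟩
  invFun q := (R - q).toNat
  left_inv n := by simp
  right_inv q := Subtype.ext (by have := q.2; simp; omega)

open MeasureTheory in
/-- Quantitative heart of Lemma 3.4: for `θ > 0` and `R ∈ ℤ` there is `C > 0`
such that for all `t ≥ 0`,
`∑_{q ≤ R} (∫_{A_q} e^{−θ|ξ|²t} dξ)^{1/2} ≤ C (1+t)^{−3/4}`,
where `A_q = {ξ ∈ ℝ³ : (3/4)2^q < |ξ| < (8/3)2^q}`. -/
theorem sum_sqrt_gaussian_annulus_decay (θ : ℝ) (hθ : 0 < θ) (R : ℤ) :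
    ∃ C : ℝ, 0 < C ∧ ∀ t : ℝ, 0 ≤ t →
      Summable (fun q : {q : ℤ // q ≤ R} =>
        Real.sqrt (∫ ξ in {ξ : EuclideanSpace ℝ (Fin 3) |
            (3 / 4 : ℝ) * 2 ^ (q : ℤ) < ‖ξ‖ ∧ ‖ξ‖ < (8 / 3 : ℝ) * 2 ^ (q : ℤ)},
          Real.exp (-θ * ‖ξ‖ ^ 2 * t))) ∧
      (∑' q : {q : ℤ // q ≤ R},
        Real.sqrt (∫ ξ in {ξ : EuclideanSpace ℝ (Fin 3) |
            (3 / 4 : ℝ) * 2 ^ (q : ℤ) < ‖ξ‖ ∧ ‖ξ‖ < (8 / 3 : ℝ) * 2 ^ (q : ℤ)},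
          Real.exp (-θ * ‖ξ‖ ^ 2 * t)))
        ≤ C * (1 + t) ^ (-(3 : ℝ) / 4) := by
  obtain ⟨C, hC, hdecay⟩ :=
    exists_tsum_rpow_mul_exp_neg_geometric_le (α := 3 / 4) (r := 1 / 4) (by norm_num)
      (by norm_num) (by norm_num) (by norm_num)
  set c := θ * (3 / 4 * 2 ^ R) ^ 2 / 2
  set M := √(volume.real (ball (0 : EuclideanSpace ℝ (Fin 3)) 1)) *
    (8 / 3 * 2 ^ R) ^ (3 / 2 : ℝ)
  have hM : 0 < M := by
    have := ENNReal.toReal_pos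
      (measure_ball_pos volume (0 : EuclideanSpace ℝ (Fin 3)) one_pos).ne' measure_ball_lt_top.ne
    positivity
  refine ⟨M * C * (min 1 c) ^ (-(3 / 4 : ℝ)), by positivity, fun t ht ↦ ?_⟩
  obtain ⟨hsum, hle⟩ := hdecay (c * t) (by positivity)
  have hterm (n : ℕ) := sqrt_setIntegral_exp_neg_dyadic_annulus_le
    (E := EuclideanSpace ℝ (Fin 3)) volume hθ.le ht (a := 3 / 4) (b := 8 / 3) (by norm_num)
    (by norm_num) R n
  simp only [finrank_euclideanSpace_fin, Nat.cast_ofNat] at hterm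
  have hsumM := hsum.mul_left M
  have hsumF := Summable.of_nonneg_of_le (fun n ↦ Real.sqrt_nonneg _) hterm hsumM
  rw [← (Int.natEquivLE R).summable_iff, ← (Int.natEquivLE R).tsum_eq]
  refine ⟨hsumF, ?_⟩
  calc _ ≤ _ := hsumF.tsum_le_tsum hterm hsumM
    _ = M * ∑' n : ℕ, ((1 / 4 : ℝ) ^ n) ^ (3 / 4 : ℝ) * Real.exp (-(c * t * (1 / 4) ^ n)) :=
        tsum_mul_left
    _ ≤ M * (C * (1 + c * t) ^ (-(3 / 4 : ℝ))) := by gcongr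
    _ ≤ M * (C * ((min 1 c) ^ (-(3 / 4 : ℝ)) * (1 + t) ^ (-(3 / 4 : ℝ)))) := by
        gcongr
        exact one_add_mul_rpow_neg_le (by positivity) ht (by norm_num)
    _ = _ := by rw [neg_div]; ring
end

section
/- Let v : ℝ × ℝ³ → ℝ³ and U : ℝ × ℝ³ → Matrix (Fin 3) (Fin 3) ℝ be differentiable, and suppose that at every point (t, x) and for all indices i, j: ∂ₜU^{ij} + Σ_k v^k · ∂_{x_k}U^{ij} = Σ_k (∂_{x_k}v^i) · U^{kj}. Then at every point (t, x): ∂ₜ(det U) + Σ_k v^k · ∂_{x_k}(det U) = (Σ_k ∂_{x_k}v^k) · det U. -/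
/-!
Along the characteristic line `s ↦ p + s • (1, v p)` the material derivative `∂ₜ + v·∇` is an
ordinary derivative, and the hypothesis says that `U` has derivative `(∇v) U` there. By Jacobi's
formula `(det U)' = ∑ᵢ det (U with row i replaced by row i of U')`, and since row `i` of `(∇v) U`
is `∑ₖ ∂ₖvⁱ • (row k of U)`, multilinearity of the determinant turns this into
`tr (∇v) · det U = (div v) · det U`.
-/

/-- Time partial derivative of a function of `(t, x) ∈ ℝ × ℝ³`. -/
noncomputable def partialT (f : ℝ × (Fin 3 → ℝ) → ℝ) (p : ℝ × (Fin 3 → ℝ)) : ℝ :=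
  deriv (fun τ : ℝ => f (τ, p.2)) p.1

/-- Spatial partial derivative `∂_{x_k}` of a function of `(t, x) ∈ ℝ × ℝ³`. -/
noncomputable def partialX (k : Fin 3) (f : ℝ × (Fin 3 → ℝ) → ℝ)
    (p : ℝ × (Fin 3 → ℝ)) : ℝ :=
  deriv (fun s : ℝ => f (p.1, p.2 + s • (Pi.single k 1 : Fin 3 → ℝ))) 0

open Matrix Finset

section Determinant

variable {n : Type*} [Fintype n] [DecidableEq n]

theorem Matrix.det_updateCol_eq_sum_perm {R : Type*} [CommRing R] (A : Matrix n n R) (j : n)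
    (c : n → R) :
    (A.updateCol j c).det
      = ∑ σ : Equiv.Perm n, Equiv.Perm.sign σ * (c (σ j) * ∏ i ∈ univ.erase j, A (σ i) i) := by
  rw [det_apply']
  refine sum_congr rfl fun σ _ => ?_
  rw [← mul_prod_erase _ _ (mem_univ j), updateCol_self]
  congr 2
  exact prod_congr rfl fun i hi => updateCol_ne (ne_of_mem_erase hi)

theorem Matrix.sum_det_updateRow_mul {R : Type*} [CommRing R] (A B : Matrix n n R) :
    ∑ i, (A.updateRow i ((B * A) i)).det = B.trace * A.det := by
  have hrow : ∀ i, (B * A) i = ∑ k, B i k • A k := fun i => by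
    ext j
    simp [mul_apply]
  simp only [hrow, det_updateRow_sum, smul_eq_mul, trace, diag, sum_mul]

variable {𝕜 : Type*} [NontriviallyNormedField 𝕜]

theorem HasDerivAt.matrix_det {M : 𝕜 → Matrix n n 𝕜} {M' : Matrix n n 𝕜} {t : 𝕜}
    (hM : ∀ i j, HasDerivAt (fun s => M s i j) (M' i j) t) :
    HasDerivAt (fun s => (M s).det) (∑ i, ((M t).updateRow i (M' i)).det) t := by
  -- Leibniz's formula `det_apply'` runs over columns, so rows of `M` become columns of `Mᵀ`.
  simp only [← det_transpose (M _), ← det_transpose (updateRow _ _ _), ← updateCol_transpose,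
    det_updateCol_eq_sum_perm]
  rw [sum_comm]
  simp only [det_apply', transpose_apply, ← mul_sum]
  refine HasDerivAt.fun_sum fun σ _ =>
    (HasDerivAt.fun_finsetProd fun i _ => hM i (σ i)).const_mul _ |>.congr_deriv ?_
  simp [mul_comm]

theorem HasLineDerivAt.matrix_det {E : Type*} [AddCommGroup E] [Module 𝕜 E]
    {M : E → Matrix n n 𝕜} {M' : Matrix n n 𝕜} {x v : E}
    (hM : ∀ i j, HasLineDerivAt 𝕜 (fun y => M y i j) (M' i j) x v) :
    HasLineDerivAt 𝕜 (fun y => (M y).det) (∑ i, ((M x).updateRow i (M' i)).det) x v := by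
  simpa [HasLineDerivAt] using HasDerivAt.matrix_det hM

theorem Differentiable.matrix_det {E : Type*} [NormedAddCommGroup E] [NormedSpace 𝕜 E]
    {M : E → Matrix n n 𝕜} (hM : ∀ i j, Differentiable 𝕜 fun x => M x i j) :
    Differentiable 𝕜 fun x => (M x).det := by
  simp only [det_apply']
  fun_prop

end Determinant

theorem partialT_eq_lineDeriv (f : ℝ × (Fin 3 → ℝ) → ℝ) (p : ℝ × (Fin 3 → ℝ)) :
    partialT f p = lineDeriv ℝ f p (1, 0) := by
  obtain ⟨t, x⟩ := p
  simp only [partialT, lineDeriv, Prod.smul_mk, smul_eq_mul, mul_one, smul_zero, Prod.mk_add_mk,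
    add_zero]
  simpa using (deriv_comp_const_add (fun τ => f (τ, x)) t 0).symm

theorem partialX_eq_lineDeriv (k : Fin 3) (f : ℝ × (Fin 3 → ℝ) → ℝ) (p : ℝ × (Fin 3 → ℝ)) :
    partialX k f p = lineDeriv ℝ f p (0, Pi.single k 1) := by
  obtain ⟨t, x⟩ := p
  simp [partialX, lineDeriv]

theorem lineDeriv_eq_partialT_add_sum_partialX {f : ℝ × (Fin 3 → ℝ) → ℝ}
    {p : ℝ × (Fin 3 → ℝ)} (hf : DifferentiableAt ℝ f p) (w : Fin 3 → ℝ) :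
    lineDeriv ℝ f p (1, w) = partialT f p + ∑ k, w k * partialX k f p := by
  have hdir : ((1 : ℝ), w) = (1, 0) + ∑ k, w k • ((0 : ℝ), (Pi.single k 1 : Fin 3 → ℝ)) := by
    ext
    · simp [Prod.fst_sum]
    · simp [Prod.snd_sum, Finset.sum_apply, Pi.single_apply]
  rw [partialT_eq_lineDeriv, hf.lineDeriv_eq_fderiv, hdir, map_add, map_sum]
  simp only [partialX_eq_lineDeriv, hf.lineDeriv_eq_fderiv, map_smul, smul_eq_mul]

theorem det_deformation_transport_general
    (v : ℝ × (Fin 3 → ℝ) → Fin 3 → ℝ)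
    (U : ℝ × (Fin 3 → ℝ) → Matrix (Fin 3) (Fin 3) ℝ)
    (hU : ∀ i j, Differentiable ℝ fun p => U p i j)
    (heq : ∀ p, ∀ i j : Fin 3,
      partialT (fun q => U q i j) p + ∑ k, v p k * partialX k (fun q => U q i j) p
        = ∑ k, partialX k (fun q => v q i) p * U p k j) :
    ∀ p, partialT (fun q => (U q).det) p
        + ∑ k, v p k * partialX k (fun q => (U q).det) p
      = (∑ k, partialX k (fun q => v q k) p) * (U p).det := by
  intro p
  set gradV : Matrix (Fin 3) (Fin 3) ℝ := of fun i k => partialX k (fun q => v q i) p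
  have hentry : ∀ i j,
      HasLineDerivAt ℝ (fun q => U q i j) ((gradV * U p) i j) p (1, v p) := fun i j => by
    have h := (hU i j p).lineDifferentiableAt.hasLineDerivAt (v := (1, v p))
    rwa [lineDeriv_eq_partialT_add_sum_partialX (hU i j p), heq] at h
  have hdet := HasLineDerivAt.matrix_det hentry
  rw [sum_det_updateRow_mul] at hdet
  rw [← lineDeriv_eq_partialT_add_sum_partialX (Differentiable.matrix_det hU p), hdet.lineDeriv]
  rfl

/-- If `∂ₜU + v·∇U = ∇v·U` pointwise, then
`∂ₜ(det U) + v·∇(det U) = (div v)·det U` pointwise. -/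
theorem det_deformation_transport
    (v : ℝ × (Fin 3 → ℝ) → Fin 3 → ℝ)
    (U : ℝ × (Fin 3 → ℝ) → Matrix (Fin 3) (Fin 3) ℝ)
    (hv : ∀ i, Differentiable ℝ fun p => v p i)
    (hU : ∀ i j, Differentiable ℝ fun p => U p i j)
    (heq : ∀ p, ∀ i j : Fin 3,
      partialT (fun q => U q i j) p + ∑ k, v p k * partialX k (fun q => U q i j) p
        = ∑ k, partialX k (fun q => v q i) p * U p k j) :
    ∀ p, partialT (fun q => (U q).det) p
        + ∑ k, v p k * partialX k (fun q => (U q).det) p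
      = (∑ k, partialX k (fun q => v q k) p) * (U p).det :=
  det_deformation_transport_general v U hU heq
end
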